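/- arXiv:1506.04184 — 6 statements merged into one kernel-verified Lean document; each statement's English description precedes it below -/
import Mathlib

section
/- Let n ≥ 1 and let o : ℚⁿ → ℚⁿ be a vector of operators where each component is of one of the forms x ↦ max over a nonempty finite family of (x_{j} + k_j), x ↦ min over such a family, or a weighted average x ↦ (Σ α_j x_{j})/(Σ α_j) + k with positive rational weights α_j. Then it is impossible that there simultaneously exist x ∈ ℚⁿ with x < o(x) componentwise and y ∈ (ℚ ∪ {+∞})ⁿ, not identically +∞, with y ≥ o(y) componentwise (where the operators are extended to ℚ ∪ {+∞} in the natural way, with the conventions max/min/averages involving +∞ equal +∞ when all relevant arguments are +∞, min picks finite values when available, and any average involving +∞ is +∞). -/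
/-!
Suppose `x < o(x)` and `y ≥ o(y)` with `y` finite somewhere. Translate `x` by the largest
constant `c` with `x + c ≤ y`; the translate touches `y` at some coordinate `i`. Every
operator of `𝒪_n` is monotone and commutes with adding a constant, so
`y i ≥ o i y ≥ o i (x + c) = o i x + c > x i + c = y i`.
-/

/-- Weighted average operator on `(ℚ ∪ {+∞})ⁿ`: equals `+∞` as soon as one of the
relevant arguments is `+∞`. -/
noncomputable def wavg {n m : ℕ} (j : Fin (m + 1) → Fin n) (α : Fin (m + 1) → ℚ)
    (k : ℚ) (x : Fin n → WithTop ℚ) : WithTop ℚ :=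
  if h : ∀ l, x (j l) ≠ ⊤ then
    (((∑ l, α l * ((x (j l)).untop (h l))) / (∑ l, α l) + k : ℚ) : WithTop ℚ)
  else ⊤

/-- The class `𝒪_n` of max-plus, min-plus and weighted-average operators, extended
to `ℚ ∪ {+∞}`. -/
noncomputable def IsOp (n : ℕ) (f : (Fin n → WithTop ℚ) → WithTop ℚ) : Prop :=
  (∃ (m : ℕ) (j : Fin (m + 1) → Fin n) (k : Fin (m + 1) → ℚ),
      ∀ x, f x = Finset.univ.sup' Finset.univ_nonempty
        (fun l => x (j l) + (k l : WithTop ℚ))) ∨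
  (∃ (m : ℕ) (j : Fin (m + 1) → Fin n) (k : Fin (m + 1) → ℚ),
      ∀ x, f x = Finset.univ.inf' Finset.univ_nonempty
        (fun l => x (j l) + (k l : WithTop ℚ))) ∨
  (∃ (m : ℕ) (j : Fin (m + 1) → Fin n) (α : Fin (m + 1) → ℚ) (k : ℚ),
      (∀ l, 0 < α l) ∧ ∀ x, f x = wavg j α k x)

lemma WithTop.untop_add_coe {α : Type*} [Add α] {a : WithTop α} (c : α) (h : a + c ≠ ⊤) :
    (a + c).untop h = a.untop (WithTop.add_ne_top.mp h).1 + c := by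
  lift a to α using (WithTop.add_ne_top.mp h).1
  rfl

theorem IsOp.monotone {n : ℕ} {f : (Fin n → WithTop ℚ) → WithTop ℚ} (hf : IsOp n f) :
    Monotone f := by
  intro x y hxy
  rcases hf with ⟨m, j, k, hf⟩ | ⟨m, j, k, hf⟩ | ⟨m, j, α, k, hα, hf⟩
  · rw [hf, hf]
    exact Finset.sup'_mono_fun fun l _ => add_le_add_left (hxy (j l)) _
  · rw [hf, hf]
    exact Finset.inf'_mono_fun fun l _ => add_le_add_left (hxy (j l)) _
  · rw [hf, hf, wavg, wavg]
    by_cases hy : ∀ l, y (j l) ≠ ⊤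
    · have hx : ∀ l, x (j l) ≠ ⊤ := fun l => ne_top_of_le_ne_top (hy l) (hxy (j l))
      rw [dif_pos hx, dif_pos hy, WithTop.coe_le_coe]
      have hα_sum : 0 < ∑ l, α l := Finset.sum_pos (fun l _ => hα l) Finset.univ_nonempty
      gcongr with l
      · exact (hα l).le
      · exact (WithTop.untop_le_untop_iff _ _).mpr (hxy (j l))
    · rw [dif_neg hy]
      exact le_top

theorem IsOp.map_add_const {n : ℕ} {f : (Fin n → WithTop ℚ) → WithTop ℚ} (hf : IsOp n f)
    (x : Fin n → WithTop ℚ) (c : ℚ) :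
    f (fun i => x i + c) = f x + c := by
  let addC : WithTop ℚ →o WithTop ℚ := ⟨(· + c), fun _ _ h => add_le_add_left h _⟩
  rcases hf with ⟨m, j, k, hf⟩ | ⟨m, j, k, hf⟩ | ⟨m, j, α, k, hα, hf⟩
  · rw [hf, hf]
    exact ((map_finset_sup' addC _ _).trans
      (Finset.sup'_congr _ rfl fun l _ => add_right_comm _ _ _)).symm
  · rw [hf, hf]
    exact ((map_finset_inf' addC _ _).trans
      (Finset.inf'_congr _ rfl fun l _ => add_right_comm _ _ _)).symm
  · rw [hf, hf, wavg, wavg]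
    by_cases hx : ∀ l, x (j l) ≠ ⊤
    · have hxc : ∀ l, x (j l) + c ≠ ⊤ := fun l =>
        WithTop.add_ne_top.mpr ⟨hx l, WithTop.coe_ne_top⟩
      rw [dif_pos hxc, dif_pos hx, ← WithTop.coe_add, WithTop.coe_inj]
      have hα_sum : (∑ l, α l) ≠ 0 :=
        (Finset.sum_pos (fun l _ => hα l) Finset.univ_nonempty).ne'
      simp only [WithTop.untop_add_coe, mul_add, Finset.sum_add_distrib, ← Finset.sum_mul]
      field_simp
      ring
    · have hxc : ¬ ∀ l, x (j l) + c ≠ ⊤ := fun h =>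
        hx fun l => (WithTop.add_ne_top.mp (h l)).1
      rw [dif_neg hxc, dif_neg hx, WithTop.top_add]

theorem exists_add_le_of_ne_top {ι α : Type*} [Finite ι] [AddCommGroup α] [LinearOrder α]
    [IsOrderedAddMonoid α] (x : ι → α) (y : ι → WithTop α) (hy : ∃ i, y i ≠ ⊤) :
    ∃ (c : α) (i₀ : ι), (∀ i, (x i : WithTop α) + c ≤ y i) ∧ y i₀ = x i₀ + c := by
  obtain ⟨i₁, hi₁⟩ := hy
  have : Nonempty ι := ⟨i₁⟩
  let d : ι → WithTop α := fun i => y i + ((-x i : α) : WithTop α)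
  have hd : ∀ i, (x i : WithTop α) + d i = y i := fun i => by
    rw [add_left_comm, ← WithTop.coe_add, add_neg_cancel, WithTop.coe_zero, add_zero]
  obtain ⟨i₀, hi₀⟩ := Finite.exists_min d
  have hd₀ : d i₀ ≠ ⊤ := ne_top_of_le_ne_top
    (WithTop.add_ne_top.mpr ⟨hi₁, WithTop.coe_ne_top⟩) (hi₀ i₁)
  refine ⟨(d i₀).untop hd₀, i₀, fun i => ?_, ?_⟩
  · rw [WithTop.coe_untop, ← hd i]
    exact add_le_add_right (hi₀ i) _
  · rw [WithTop.coe_untop, hd]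

theorem stmt0_general (n : ℕ)
    (o : Fin n → (Fin n → WithTop ℚ) → WithTop ℚ) (ho : ∀ i, IsOp n (o i)) :
    ¬ ((∃ x : Fin n → ℚ, ∀ i, (x i : WithTop ℚ) < o i (fun j => (x j : WithTop ℚ))) ∧
       (∃ y : Fin n → WithTop ℚ, (¬ ∀ i, y i = ⊤) ∧ ∀ i, o i y ≤ y i)) := by
  rintro ⟨⟨x, hx⟩, y, hy_ne, hy⟩
  obtain ⟨c, i, hle, heq⟩ := exists_add_le_of_ne_top x y (not_forall.mp hy_ne)
  have : (x i : WithTop ℚ) + c < x i + c :=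
    calc (x i : WithTop ℚ) + c < o i (fun j => x j) + c :=
          WithTop.add_lt_add_right WithTop.coe_ne_top (hx i)
      _ = o i (fun j => x j + c) := ((ho i).map_add_const _ c).symm
      _ ≤ o i y := (ho i).monotone hle
      _ ≤ y i := hy i
      _ = x i + c := heq
  exact lt_irrefl _ this

/-- The primal `x < o(x)` (with `x` rational) and the dual `y ≥ o(y)`
(with `y` in `(ℚ ∪ {+∞})ⁿ`, not identically `+∞`) cannot both be satisfiable. -/
theorem stmt0 (n : ℕ) (hn : 1 ≤ n)
    (o : Fin n → (Fin n → WithTop ℚ) → WithTop ℚ) (ho : ∀ i, IsOp n (o i)) :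
    ¬ ((∃ x : Fin n → ℚ, ∀ i, (x i : WithTop ℚ) < o i (fun j => (x j : WithTop ℚ))) ∧
       (∃ y : Fin n → WithTop ℚ, (¬ ∀ i, y i = ⊤) ∧ ∀ i, o i y ≤ y i)) :=
  stmt0_general n o ho
end

section
/- Let P be a row-stochastic n×n matrix, μ a stationary distribution of P, po : {1,…,n}² → ℝ, and y ∈ (ℝ ∪ {+∞})ⁿ. Suppose that whenever y_a is finite and P(a,b) > 0 then y_b is finite, and that for each a with μ(a) > 0 and y_a finite we have y_a ≥ Σ_{b : P(a,b)>0} P(a,b)·(y_b + po(a,b)). If μ is supported on states with finite y, then Σ_{a,b} μ(a)P(a,b)·po(a,b) ≤ 0. -/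
/-!
Average the superharmonicity inequality `y a ≥ ∑_b P a b (y b + po a b)` against `μ`.
By stationarity the `y`-terms on the two sides coincide, leaving the stationary
average of `po` on the left of `0`. Since `μ` lives where `y` is finite, only real values
of `y` enter.
-/

variable {ι : Type*} [Fintype ι]

theorem sum_sum_stationary_mul {R : Type*} [CommSemiring R] (P : Matrix ι ι R) (μ : ι → R)
    (hstat : ∀ b, μ b = ∑ a, μ a * P a b) (g : ι → R) :
    ∑ a, ∑ b, μ a * P a b * g b = ∑ a, μ a * g a := by
  rw [Finset.sum_comm]
  exact Finset.sum_congr rfl fun b _ => by rw [hstat b, Finset.sum_mul]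

theorem sum_stationary_mul_le_zero_of_superharmonic (P : Matrix ι ι ℝ) (μ : ι → ℝ)
    (hμ0 : ∀ a, 0 ≤ μ a) (hstat : ∀ b, μ b = ∑ a, μ a * P a b) (po : ι → ι → ℝ) (g : ι → ℝ)
    (hsuper : ∀ a, 0 < μ a → ∑ b, P a b * (g b + po a b) ≤ g a) :
    ∑ a, ∑ b, μ a * P a b * po a b ≤ 0 := by
  have haverage : ∑ a, μ a * ∑ b, P a b * (g b + po a b) ≤ ∑ a, μ a * g a := by
    refine Finset.sum_le_sum fun a _ => ?_
    rcases (hμ0 a).lt_or_eq with hpos | hzero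
    · exact mul_le_mul_of_nonneg_left (hsuper a hpos) hpos.le
    · simp [← hzero]
  have hexpand : ∑ a, μ a * ∑ b, P a b * (g b + po a b)
      = ∑ a, ∑ b, μ a * P a b * g b + ∑ a, ∑ b, μ a * P a b * po a b := by
    simp only [Finset.mul_sum, ← Finset.sum_add_distrib]
    exact Finset.sum_congr rfl fun a _ => Finset.sum_congr rfl fun b _ => by ring
  rw [hexpand, sum_sum_stationary_mul P μ hstat] at haverage
  linarith

theorem stmt7_general (n : ℕ) (P : Matrix (Fin n) (Fin n) ℝ)
    (hP0 : ∀ a b, 0 ≤ P a b)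
    (μ : Fin n → ℝ) (hμ0 : ∀ a, 0 ≤ μ a)
    (hstat : ∀ b, μ b = ∑ a, μ a * P a b)
    (po : Fin n → Fin n → ℝ) (y : Fin n → WithTop ℝ)
    (hineq : ∀ a, 0 < μ a → y a ≠ ⊤ →
      ∑ b ∈ Finset.univ.filter (fun b => 0 < P a b),
          P a b * ((y b).untopD 0 + po a b) ≤ (y a).untopD 0)
    (hsupp : ∀ a, 0 < μ a → y a ≠ ⊤) :
    ∑ a, ∑ b, μ a * P a b * po a b ≤ 0 := by
  refine sum_stationary_mul_le_zero_of_superharmonic P μ hμ0 hstat po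
    (fun a => (y a).untopD 0) fun a hμa => ?_
  rw [← Finset.sum_filter_of_ne fun b _ hb => (hP0 a b).lt_of_ne' (left_ne_zero_of_mul hb)]
  exact hineq a hμa (hsupp a hμa)

/-- Dual counterpart of the stationary payoff estimate: if `y ∈ (ℝ ∪ {+∞})ⁿ` is
finite on the support of the stationary distribution `μ`, finiteness propagates along
positive transitions, and `y_a ≥ Σ_{b : P(a,b)>0} P(a,b)(y_b + po(a,b))` at every
supported state, then the stationary average payoff is `≤ 0`. -/
theorem stmt7 (n : ℕ) (P : Matrix (Fin n) (Fin n) ℝ)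
    (hP0 : ∀ a b, 0 ≤ P a b) (hP1 : ∀ a, ∑ b, P a b = 1)
    (μ : Fin n → ℝ) (hμ0 : ∀ a, 0 ≤ μ a) (hμ1 : ∑ a, μ a = 1)
    (hstat : ∀ b, μ b = ∑ a, μ a * P a b)
    (po : Fin n → Fin n → ℝ) (y : Fin n → WithTop ℝ)
    (hprop : ∀ a b, y a ≠ ⊤ → 0 < P a b → y b ≠ ⊤)
    (hineq : ∀ a, 0 < μ a → y a ≠ ⊤ →
      ∑ b ∈ Finset.univ.filter (fun b => 0 < P a b),
          P a b * ((y b).untopD 0 + po a b) ≤ (y a).untopD 0)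
    (hsupp : ∀ a, 0 < μ a → y a ≠ ⊤) :
    ∑ a, ∑ b, μ a * P a b * po a b ≤ 0 :=
  stmt7_general n P hP0 μ hμ0 hstat po y hineq hsupp
end

section
/- Let V = ℚ × ℚ with lexicographic order (written a + bε), and let φ(t, x₁,…,xₙ) be a finite conjunction/disjunction of linear inequalities (strict or non-strict) and equalities with rational coefficients in the variables t, x₁,…,xₙ. If there exist a, b ∈ ℚⁿ such that φ(t, a + b·t) holds over ℚ for all sufficiently small positive rational t, then φ(ε, x) is satisfiable in V (with the linear expressions interpreted in the ordered ℚ-vector space V, the coefficient of t multiplying ε). -/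
/-- Quantifier-free semilinear formulas: Boolean combinations (conjunction,
disjunction) of atoms `c₀ + c₁·t + Σ cᵢ·xᵢ ◊ 0` with `◊ ∈ {<, ≤, =}`. -/
inductive LinForm (n : ℕ) where
  | lt (c₀ c₁ : ℚ) (c : Fin n → ℚ) : LinForm n
  | le (c₀ c₁ : ℚ) (c : Fin n → ℚ) : LinForm n
  | eq (c₀ c₁ : ℚ) (c : Fin n → ℚ) : LinForm n
  | and (φ ψ : LinForm n) : LinForm n
  | or (φ ψ : LinForm n) : LinForm n

/-- Strict lexicographic order on `V = ℚ × ℚ` (`(a,b)` is `a + bε`). -/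
def Vlt (p q : ℚ × ℚ) : Prop := p.1 < q.1 ∨ (p.1 = q.1 ∧ p.2 < q.2)

/-- The linear expression `c₀ + c₁·t + Σ cᵢ·xᵢ` evaluated in `V = ℚ × ℚ`
(constants embedded as `(c₀, 0)`, scalars acting componentwise). -/
def lincombV {n : ℕ} (c₀ c₁ : ℚ) (c : Fin n → ℚ) (t : ℚ × ℚ) (x : Fin n → ℚ × ℚ) :
    ℚ × ℚ :=
  (c₀ + c₁ * t.1 + ∑ i, c i * (x i).1, c₁ * t.2 + ∑ i, c i * (x i).2)

/-- Evaluation of a semilinear formula in `V = ℚ × ℚ` with the lexicographic order. -/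
def evalV {n : ℕ} : LinForm n → (ℚ × ℚ) → (Fin n → ℚ × ℚ) → Prop
  | .lt c₀ c₁ c, t, x => Vlt (lincombV c₀ c₁ c t x) (0, 0)
  | .le c₀ c₁ c, t, x => Vlt (lincombV c₀ c₁ c t x) (0, 0) ∨ lincombV c₀ c₁ c t x = (0, 0)
  | .eq c₀ c₁ c, t, x => lincombV c₀ c₁ c t x = (0, 0)
  | .and φ ψ, t, x => evalV φ t x ∧ evalV ψ t x
  | .or φ ψ, t, x => evalV φ t x ∨ evalV ψ t x

/-- Evaluation of a semilinear formula over `ℚ`. -/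
def evalQ {n : ℕ} : LinForm n → ℚ → (Fin n → ℚ) → Prop
  | .lt c₀ c₁ c, t, x => c₀ + c₁ * t + ∑ i, c i * x i < 0
  | .le c₀ c₁ c, t, x => c₀ + c₁ * t + ∑ i, c i * x i ≤ 0
  | .eq c₀ c₁ c, t, x => c₀ + c₁ * t + ∑ i, c i * x i = 0
  | .and φ ψ, t, x => evalQ φ t x ∧ evalQ ψ t x
  | .or φ ψ, t, x => evalQ φ t x ∨ evalQ ψ t x

lemma sign_ev (A B : ℚ) :
    (∃ δ, 0 < δ ∧ ∀ t, 0 < t → t ≤ δ → A + B * t < 0) ∨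
    (∃ δ, 0 < δ ∧ ∀ t, 0 < t → t ≤ δ → A + B * t = 0) ∨
    (∃ δ, 0 < δ ∧ ∀ t, 0 < t → t ≤ δ → 0 < A + B * t) := by
  rcases lt_trichotomy A 0 with hA | hA | hA
  · left
    refine ⟨-A / (|B| + 1), div_pos (by linarith) (by positivity), fun t ht ht' => ?_⟩
    have hb1 : (0:ℚ) < |B| + 1 := by positivity
    have h1 : t * (|B| + 1) ≤ -A := (le_div_iff₀ hb1).mp ht'
    have h2 : B * t ≤ |B| * t := mul_le_mul_of_nonneg_right (le_abs_self B) ht.le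
    nlinarith [abs_nonneg B]
  · subst hA
    rcases lt_trichotomy B 0 with hB | hB | hB
    · left; exact ⟨1, one_pos, fun t ht _ => by nlinarith⟩
    · right; left; exact ⟨1, one_pos, fun t ht _ => by simp [hB]⟩
    · right; right; exact ⟨1, one_pos, fun t ht _ => by nlinarith⟩
  · right; right
    refine ⟨A / (|B| + 1), div_pos hA (by positivity), fun t ht ht' => ?_⟩
    have hb1 : (0:ℚ) < |B| + 1 := by positivity
    have h1 : t * (|B| + 1) ≤ A := (le_div_iff₀ hb1).mp ht'
    have h2 : -|B| * t ≤ B * t := mul_le_mul_of_nonneg_right (neg_abs_le B) ht.le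
    nlinarith [abs_nonneg B]

lemma key_lt (A B δ : ℚ) (hδ : 0 < δ) (h : ∀ t, 0 < t → t ≤ δ → A + B * t < 0) :
    A < 0 ∨ (A = 0 ∧ B < 0) := by
  rcases sign_ev A B with ⟨δ', hδ', h'⟩ | ⟨δ', hδ', h'⟩ | ⟨δ', hδ', h'⟩
  · rcases lt_trichotomy A 0 with hA | hA | hA
    · exact Or.inl hA
    · right
      refine ⟨hA, ?_⟩
      have := h δ hδ le_rfl
      subst hA; nlinarith
    · exfalso
      have hb1 : (0:ℚ) < |B| + 1 := by positivity
      have hq : 0 < A / (|B| + 1) := div_pos hA hb1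
      have h1 := h' (min δ' (A / (|B| + 1))) (lt_min hδ' hq) (min_le_left _ _)
      have h2 : min δ' (A / (|B| + 1)) * (|B| + 1) ≤ A := (le_div_iff₀ hb1).mp (min_le_right _ _)
      have h3 : -|B| * min δ' (A / (|B| + 1)) ≤ B * min δ' (A / (|B| + 1)) :=
        mul_le_mul_of_nonneg_right (neg_abs_le B) (le_of_lt (lt_min hδ' hq))
      nlinarith [abs_nonneg B, lt_min hδ' hq]
  · have h1 := h (min δ δ') (lt_min hδ hδ') (min_le_left _ _)
    have h2 := h' (min δ δ') (lt_min hδ hδ') (min_le_right _ _)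
    simp [h2] at h1
  · have h1 := h (min δ δ') (lt_min hδ hδ') (min_le_left _ _)
    have h2 := h' (min δ δ') (lt_min hδ hδ') (min_le_right _ _)
    linarith

lemma key_le (A B δ : ℚ) (hδ : 0 < δ) (h : ∀ t, 0 < t → t ≤ δ → A + B * t ≤ 0) :
    A < 0 ∨ (A = 0 ∧ B < 0) ∨ (A = 0 ∧ B = 0) := by
  have hA : A ≤ 0 := by
    by_contra hA
    push_neg at hA
    have hb1 : (0:ℚ) < |B| + 1 := by positivity
    set s := min δ (A / (|B| + 1)) with hs
    have hs0 : 0 < s := lt_min hδ (div_pos hA hb1)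
    have h1 := h s hs0 (min_le_left _ _)
    have h2 : s * (|B| + 1) ≤ A := (le_div_iff₀ hb1).mp (min_le_right _ _)
    have h3 : -|B| * s ≤ B * s := mul_le_mul_of_nonneg_right (neg_abs_le B) hs0.le
    nlinarith [abs_nonneg B]
  rcases lt_or_eq_of_le hA with hA | hA
  · exact Or.inl hA
  · have hB : B * δ ≤ 0 := by have := h δ hδ le_rfl; linarith [hA]
    have hB' : B ≤ 0 := by nlinarith
    rcases lt_or_eq_of_le hB' with hB'' | hB''
    · exact Or.inr (Or.inl ⟨hA, hB''⟩)
    · exact Or.inr (Or.inr ⟨hA, hB''⟩)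

lemma key_eq (A B δ : ℚ) (hδ : 0 < δ) (h : ∀ t, 0 < t → t ≤ δ → A + B * t = 0) :
    A = 0 ∧ B = 0 := by
  have h1 := h δ hδ le_rfl
  have h2 := h (δ / 2) (by linarith) (by linarith)
  constructor <;> nlinarith

lemma comb {n : ℕ} (c₀ c₁ : ℚ) (c a b : Fin n → ℚ) (t : ℚ) :
    c₀ + c₁ * t + ∑ i, c i * (a i + b i * t)
      = (c₀ + ∑ i, c i * a i) + (c₁ + ∑ i, c i * b i) * t := by
  simp only [mul_add, Finset.sum_add_distrib, ← mul_assoc, ← Finset.sum_mul]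
  ring

lemma lincomb_eval {n : ℕ} (c₀ c₁ : ℚ) (c a b : Fin n → ℚ) :
    lincombV c₀ c₁ c (0, 1) (fun i => (a i, b i))
      = (c₀ + ∑ i, c i * a i, c₁ + ∑ i, c i * b i) := by
  simp [lincombV]

lemma dich {n : ℕ} (a b : Fin n → ℚ) (φ : LinForm n) :
    (∃ δ, 0 < δ ∧ ∀ t, 0 < t → t ≤ δ → evalQ φ t (fun i => a i + b i * t)) ∨
    (∃ δ, 0 < δ ∧ ∀ t, 0 < t → t ≤ δ → ¬ evalQ φ t (fun i => a i + b i * t)) := by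
  induction φ with
  | lt c₀ c₁ c =>
    rcases sign_ev (c₀ + ∑ i, c i * a i) (c₁ + ∑ i, c i * b i) with
      ⟨δ, hδ, h⟩ | ⟨δ, hδ, h⟩ | ⟨δ, hδ, h⟩
    · left; exact ⟨δ, hδ, fun t ht ht' => by simpa [evalQ, comb] using h t ht ht'⟩
    · right; exact ⟨δ, hδ, fun t ht ht' => by simp [evalQ, comb, h t ht ht']⟩
    · right; exact ⟨δ, hδ, fun t ht ht' => by simp [evalQ, comb]; linarith [h t ht ht']⟩
  | le c₀ c₁ c =>
    rcases sign_ev (c₀ + ∑ i, c i * a i) (c₁ + ∑ i, c i * b i) with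
      ⟨δ, hδ, h⟩ | ⟨δ, hδ, h⟩ | ⟨δ, hδ, h⟩
    · left; exact ⟨δ, hδ, fun t ht ht' => by simp [evalQ, comb]; linarith [h t ht ht']⟩
    · left; exact ⟨δ, hδ, fun t ht ht' => by simp [evalQ, comb, h t ht ht']⟩
    · right; exact ⟨δ, hδ, fun t ht ht' => by simp [evalQ, comb]; linarith [h t ht ht']⟩
  | eq c₀ c₁ c =>
    rcases sign_ev (c₀ + ∑ i, c i * a i) (c₁ + ∑ i, c i * b i) with
      ⟨δ, hδ, h⟩ | ⟨δ, hδ, h⟩ | ⟨δ, hδ, h⟩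
    · right; exact ⟨δ, hδ, fun t ht ht' => by simp [evalQ, comb]; linarith [h t ht ht']⟩
    · left; exact ⟨δ, hδ, fun t ht ht' => by simp [evalQ, comb, h t ht ht']⟩
    · right; exact ⟨δ, hδ, fun t ht ht' => by simp [evalQ, comb]; linarith [h t ht ht']⟩
  | and φ ψ ihφ ihψ =>
    rcases ihφ with ⟨δ₁, hδ₁, h₁⟩ | ⟨δ₁, hδ₁, h₁⟩
    · rcases ihψ with ⟨δ₂, hδ₂, h₂⟩ | ⟨δ₂, hδ₂, h₂⟩
      · left
        exact ⟨min δ₁ δ₂, lt_min hδ₁ hδ₂, fun t ht ht' =>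
          ⟨h₁ t ht (ht'.trans (min_le_left _ _)), h₂ t ht (ht'.trans (min_le_right _ _))⟩⟩
      · right
        exact ⟨δ₂, hδ₂, fun t ht ht' hc => h₂ t ht ht' hc.2⟩
    · right
      exact ⟨δ₁, hδ₁, fun t ht ht' hc => h₁ t ht ht' hc.1⟩
  | or φ ψ ihφ ihψ =>
    rcases ihφ with ⟨δ₁, hδ₁, h₁⟩ | ⟨δ₁, hδ₁, h₁⟩
    · left; exact ⟨δ₁, hδ₁, fun t ht ht' => Or.inl (h₁ t ht ht')⟩
    · rcases ihψ with ⟨δ₂, hδ₂, h₂⟩ | ⟨δ₂, hδ₂, h₂⟩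
      · left; exact ⟨δ₂, hδ₂, fun t ht ht' => Or.inr (h₂ t ht ht')⟩
      · right
        exact ⟨min δ₁ δ₂, lt_min hδ₁ hδ₂, fun t ht ht' hc => by
          rcases hc with hc | hc
          · exact h₁ t ht (ht'.trans (min_le_left _ _)) hc
          · exact h₂ t ht (ht'.trans (min_le_right _ _)) hc⟩

lemma main_lemma {n : ℕ} (a b : Fin n → ℚ) (φ : LinForm n) :
    ∀ δ : ℚ, 0 < δ → (∀ t, 0 < t → t ≤ δ → evalQ φ t (fun i => a i + b i * t)) →
      evalV φ (0, 1) (fun i => (a i, b i)) := by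
  induction φ with
  | lt c₀ c₁ c =>
    intro δ hδ h
    have h' : ∀ t, 0 < t → t ≤ δ →
        (c₀ + ∑ i, c i * a i) + (c₁ + ∑ i, c i * b i) * t < 0 := by
      intro t ht ht'
      have := h t ht ht'
      simpa [evalQ, comb] using this
    have := key_lt _ _ δ hδ h'
    simp only [evalV, lincomb_eval, Vlt]
    rcases this with h1 | ⟨h1, h2⟩
    · exact Or.inl h1
    · exact Or.inr ⟨h1, h2⟩
  | le c₀ c₁ c =>
    intro δ hδ h
    have h' : ∀ t, 0 < t → t ≤ δ →
        (c₀ + ∑ i, c i * a i) + (c₁ + ∑ i, c i * b i) * t ≤ 0 := by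
      intro t ht ht'
      have := h t ht ht'
      simpa [evalQ, comb] using this
    have := key_le _ _ δ hδ h'
    simp only [evalV, lincomb_eval, Vlt]
    rcases this with h1 | ⟨h1, h2⟩ | ⟨h1, h2⟩
    · exact Or.inl (Or.inl h1)
    · exact Or.inl (Or.inr ⟨h1, h2⟩)
    · exact Or.inr (by simp [h1, h2, Prod.ext_iff])
  | eq c₀ c₁ c =>
    intro δ hδ h
    have h' : ∀ t, 0 < t → t ≤ δ →
        (c₀ + ∑ i, c i * a i) + (c₁ + ∑ i, c i * b i) * t = 0 := by
      intro t ht ht'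
      have := h t ht ht'
      simpa [evalQ, comb] using this
    have := key_eq _ _ δ hδ h'
    simp only [evalV, lincomb_eval]
    simp [this.1, this.2, Prod.ext_iff]
  | and φ ψ ihφ ihψ =>
    intro δ hδ h
    exact ⟨ihφ δ hδ (fun t ht ht' => (h t ht ht').1),
           ihψ δ hδ (fun t ht ht' => (h t ht ht').2)⟩
  | or φ ψ ihφ ihψ =>
    intro δ hδ h
    rcases dich a b φ with ⟨δ', hδ', h'⟩ | ⟨δ', hδ', h'⟩
    · exact Or.inl (ihφ δ' hδ' h')
    · refine Or.inr (ihψ (min δ δ') (lt_min hδ hδ') fun t ht ht' => ?_)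
      have h1 := h t ht (ht'.trans (min_le_left _ _))
      have h2 := h' t ht (ht'.trans (min_le_right _ _))
      rcases h1 with h1 | h1
      · exact absurd h1 h2
      · exact h1

/-- If `φ(t, a + b·t)` holds over `ℚ` for all sufficiently small positive `t`,
then `φ(ε, x)` is satisfiable in `V = ℚ × ℚ` with the lexicographic order. -/
theorem stmt9 (n : ℕ) (φ : LinForm n) (a b : Fin n → ℚ) (t₀ : ℚ) (ht₀ : 0 < t₀)
    (h : ∀ t : ℚ, 0 < t → t ≤ t₀ → evalQ φ t (fun i => a i + b i * t)) :
    ∃ x : Fin n → ℚ × ℚ, evalV φ (0, 1) x :=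
  ⟨fun i => (a i, b i), main_lemma a b φ t₀ ht₀ h⟩
end

section
/- Let o : ℚⁿ → ℚⁿ consist only of max-plus operators (each component is x ↦ max_j (x_{σ(j)} + k_j)), and let G be the directed graph with an edge i → j of weight k whenever x_j + k appears in o_i. Then x < o(x) is satisfiable in ℚⁿ if and only if for every vertex i there is an edge-selection (choice of one out-edge per vertex) such that every cycle in the resulting functional graph has strictly positive total weight. -/
set_option maxHeartbeats 1000000

lemma pigeon (n : ℕ) (f : Fin n → Fin n) (i : Fin n) :
    ∃ a b : ℕ, a < b ∧ b ≤ n ∧ f^[a] i = f^[b] i := by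
  have h : ¬ Function.Injective (fun t : Fin (n+1) => f^[(t : ℕ)] i) := by
    intro hinj
    have := Fintype.card_le_of_injective _ hinj
    simp at this
  rw [Function.not_injective_iff] at h
  obtain ⟨t₁, t₂, heq, hne⟩ := h
  rcases lt_or_gt_of_ne (fun h => hne (Fin.ext (by exact_mod_cast congrArg (Fin.val) h))) with h | h
  · exact ⟨t₁, t₂, by exact_mod_cast h, by omega, heq⟩
  · exact ⟨t₂, t₁, by exact_mod_cast h, by omega, heq.symm⟩

lemma per {n : ℕ} (f : Fin n → Fin n) (i : Fin n) (a L : ℕ)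
    (h : f^[a + L] i = f^[a] i) : ∀ c, a ≤ c → f^[c + L] i = f^[c] i := by
  intro c hc
  have h1 : c + L = (c - a) + (a + L) := by omega
  have h2 : (c - a) + a = c := by omega
  rw [h1, Function.iterate_add_apply, h, ← Function.iterate_add_apply, h2]

lemma sumshift {n : ℕ} (f : Fin n → Fin n) (w : Fin n → ℚ) (i : Fin n) (a L : ℕ)
    (h : f^[a + L] i = f^[a] i) :
    ∀ c, a ≤ c → ∑ q ∈ Finset.Ico c (c + L), w (f^[q] i)
      = ∑ q ∈ Finset.Ico a (a + L), w (f^[q] i) := by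
  intro c hc
  induction c, hc using Nat.le_induction with
  | base => rfl
  | succ c hc ih =>
    have e1 : ∑ q ∈ Finset.Ico c (c + 1 + L), w (f^[q] i)
        = ∑ q ∈ Finset.Ico c (c + L), w (f^[q] i) + w (f^[c + L] i) := by
      have : c + 1 + L = (c + L) + 1 := by omega
      rw [this, Finset.sum_Ico_succ_top (by omega)]
    have e2 : ∑ q ∈ Finset.Ico c (c + 1 + L), w (f^[q] i)
        = w (f^[c] i) + ∑ q ∈ Finset.Ico (c + 1) (c + 1 + L), w (f^[q] i) := by
      rw [Finset.sum_eq_sum_Ico_succ_bot (by omega)]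
    have e3 : f^[c + L] i = f^[c] i := per f i a L h c hc
    rw [← ih]
    linarith [e1, e2, e3 ▸ e1]

-- cycle weight at f^[a] i equals Ico-sum
lemma cycw {n : ℕ} (f : Fin n → Fin n) (w : Fin n → ℚ) (i : Fin n) (a L : ℕ) :
    ∑ q ∈ Finset.Ico a (a + L), w (f^[q] i)
      = ∑ q ∈ Finset.range L, w (f^[q] (f^[a] i)) := by
  rw [Finset.sum_Ico_eq_sum_range]
  simp only [Nat.add_sub_cancel_left]
  refine Finset.sum_congr rfl fun q _ => ?_
  rw [← Function.iterate_add_apply, Nat.add_comm]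

lemma key {n : ℕ} (hn : 1 ≤ n) (f : Fin n → Fin n) (w : Fin n → ℚ)
    (hpos : ∀ (i : Fin n) (p : ℕ), f^[p+1] i = i →
      0 < ∑ q ∈ Finset.range (p+1), w (f^[q] i)) :
    ∃ x : Fin n → ℚ, ∀ i, x i < x (f i) + w i := by
  classical
  -- set of (vertex, period-1) pairs on cycles
  set F : Finset (Fin n × Fin n) :=
    Finset.univ.filter (fun vL => f^[(vL.2 : ℕ)+1] vL.1 = vL.1) with hF
  have hFne : F.Nonempty := by
    obtain ⟨a, b, hab, hbn, heq⟩ := pigeon n f ⟨0, hn⟩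
    have hL : b - a - 1 < n := by omega
    refine ⟨(f^[a] ⟨0, hn⟩, ⟨b - a - 1, hL⟩), ?_⟩
    simp only [hF, Finset.mem_filter, Finset.mem_univ, true_and]
    have h1 : (b - a - 1) + 1 = b - a := by omega
    rw [h1, ← Function.iterate_add_apply]
    have : b - a + a = b := by omega
    rw [this, ← heq]
  set Winf : ℚ := F.inf' hFne (fun vL => ∑ q ∈ Finset.range ((vL.2 : ℕ)+1), w (f^[q] vL.1))
    with hWinf
  have hWpos : 0 < Winf := by
    rw [hWinf, Finset.lt_inf'_iff]
    intro vL hvL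
    simp only [hF, Finset.mem_filter, Finset.mem_univ, true_and] at hvL
    exact hpos vL.1 vL.2 hvL
  set ε : ℚ := Winf / (2 * n) with hε
  have hεpos : 0 < ε := by
    apply div_pos hWpos
    positivity
  have hne : (Finset.Icc 1 n).Nonempty := ⟨1, by simp [hn]⟩
  set S : Fin n → ℕ → ℚ := fun i t => ∑ q ∈ Finset.range t, w (f^[q] i) with hS
  set x : Fin n → ℚ := fun i => (Finset.Icc 1 n).inf' hne (fun t => S i t - t * ε) with hx
  have hle : ∀ i t, 1 ≤ t → t ≤ n → x i ≤ S i t - t * ε := by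
    intro i t h1 h2
    exact Finset.inf'_le _ (by simp [Finset.mem_Icc, h1, h2])
  -- pumping claim
  have pump : ∀ i, x i ≤ S i (n+1) - (n+1) * ε := by
    intro i
    obtain ⟨a, b, hab, hbn, heq⟩ := pigeon n f i
    set L : ℕ := b - a with hLdef
    have hab' : f^[a + L] i = f^[a] i := by
      have : a + L = b := by omega
      rw [this, heq]
    have hL1 : 1 ≤ L := by omega
    have hLn : L ≤ n := by omega
    set W : ℚ := ∑ q ∈ Finset.Ico a (a + L), w (f^[q] i) with hW
    have hWge : Winf ≤ W := by
      have hv : f^[L] (f^[a] i) = f^[a] i := by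
        rw [← Function.iterate_add_apply]
        have : L + a = a + L := by omega
        rw [this, hab']
      have hmem : ((f^[a] i, (⟨L - 1, by omega⟩ : Fin n)) : Fin n × Fin n) ∈ F := by
        simp only [hF, Finset.mem_filter, Finset.mem_univ, true_and]
        have : (L - 1) + 1 = L := by omega
        rw [this, hv]
      have := Finset.inf'_le (f := fun vL : Fin n × Fin n =>
        ∑ q ∈ Finset.range ((vL.2 : ℕ)+1), w (f^[q] vL.1)) hmem
      rw [hWinf]
      refine this.trans_eq ?_
      simp only
      have : (L - 1) + 1 = L := by omega
      rw [this, hW, cycw]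
    -- split S i (n+1)
    have hsplit : S i (n+1) = S i (n+1-L) + W := by
      calc S i (n+1) = ∑ q ∈ Finset.Ico 0 (n+1-L), w (f^[q] i)
              + ∑ q ∈ Finset.Ico (n+1-L) (n+1), w (f^[q] i) := by
            simp only [hS]
            rw [Finset.range_eq_Ico,
              Finset.sum_Ico_consecutive _ (Nat.zero_le (n+1-L)) (by omega : n+1-L ≤ n+1)]
        _ = S i (n+1-L) + W := by
            congr 1
            · simp only [hS, Finset.range_eq_Ico]
            · rw [hW, ← sumshift f w i a L hab' (n+1-L) (by omega),
                show (n+1-L)+L = n+1 from by omega]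
    have hWε : (L : ℚ) * ε ≤ W := by
      have h1 : (L : ℚ) ≤ n := by exact_mod_cast hLn
      have h2 : (L : ℚ) * ε ≤ n * ε := by
        apply mul_le_mul_of_nonneg_right h1 hεpos.le
      have h3 : (n : ℚ) * ε = Winf / 2 := by
        rw [hε]
        have hn' : (0:ℚ) < n := by exact_mod_cast hn
        field_simp
      linarith
    have hx' : x i ≤ S i (n+1-L) - (n+1-L : ℕ) * ε := hle i (n+1-L) (by omega) (by omega)
    have hcast : ((n+1-L : ℕ) : ℚ) = (n:ℚ) + 1 - L := by
      push_cast [Nat.cast_sub (by omega : L ≤ n+1)]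
      ring
    rw [hsplit]
    rw [hcast] at hx'
    linarith
  refine ⟨x, fun i => ?_⟩
  obtain ⟨t, ht, hteq⟩ := Finset.exists_mem_eq_inf' hne (fun t => S (f i) t - t * ε)
  simp only [Finset.mem_Icc] at ht
  have hrec : S i (t+1) = w i + S (f i) t := by
    have h1 : ∀ q : ℕ, w (f^[q+1] i) = w (f^[q] (f i)) := fun q => by
      rw [Function.iterate_succ_apply]
    simp only [hS]
    rw [Finset.sum_range_succ']
    simp only [Function.iterate_zero_apply, h1]
    exact add_comm _ _
  have hxi : x i ≤ S i (t+1) - ((t:ℚ)+1) * ε := by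
    rcases Nat.lt_or_ge t n with h | h
    · have := hle i (t+1) (by omega) (by omega)
      exact_mod_cast this
    · have htn : t = n := by omega
      rw [htn]
      exact pump i
  have : x (f i) = S (f i) t - t * ε := hteq
  push_cast at hxi
  linarith

/-- For a purely max-plus system `o_i(x) = max_l (x_{j i l} + k i l)`, the strict
primal `x < o(x)` is satisfiable over `ℚ` iff for every vertex there is a positional
edge-selection `σ` all of whose cycles (in the functional graph `v ↦ j v (σ v)`)
have strictly positive total weight. -/
theorem stmt12 (n : ℕ) (hn : 1 ≤ n) (m : Fin n → ℕ)
    (j : (i : Fin n) → Fin (m i + 1) → Fin n)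
    (k : (i : Fin n) → Fin (m i + 1) → ℚ) :
    (∃ x : Fin n → ℚ, ∀ i,
        x i < Finset.univ.sup' Finset.univ_nonempty (fun l => x (j i l) + k i l)) ↔
    (∀ _i : Fin n, ∃ σ : (v : Fin n) → Fin (m v + 1),
        ∀ (i : Fin n) (p : ℕ),
          (fun v => j v (σ v))^[p + 1] i = i →
          0 < ∑ q ∈ Finset.range (p + 1),
                k ((fun v => j v (σ v))^[q] i) (σ ((fun v => j v (σ v))^[q] i))) := by
  constructor
  · rintro ⟨x, hx⟩ _i
    -- choose an argmax selection
    have hsel : ∀ v : Fin n, ∃ l : Fin (m v + 1),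
        Finset.univ.sup' Finset.univ_nonempty (fun l => x (j v l) + k v l)
          = x (j v l) + k v l := by
      intro v
      obtain ⟨l, _, hl⟩ := Finset.exists_mem_eq_sup' (Finset.univ_nonempty)
        (fun l => x (j v l) + k v l)
      exact ⟨l, hl⟩
    choose σ hσ using hsel
    refine ⟨σ, fun i p hcyc => ?_⟩
    set f : Fin n → Fin n := fun v => j v (σ v) with hf
    set w : Fin n → ℚ := fun v => k v (σ v) with hw
    have hstep : ∀ v, x v < x (f v) + w v := fun v => (hx v).trans_eq (hσ v)
    have htel : ∑ q ∈ Finset.range (p+1), (x (f^[q] i) - x (f^[q+1] i)) = 0 := by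
      rw [Finset.sum_range_sub' (fun q => x (f^[q] i))]
      rw [Function.iterate_zero_apply, hcyc, sub_self]
    have hlt : ∀ q ∈ Finset.range (p+1),
        x (f^[q] i) - x (f^[q+1] i) < w (f^[q] i) := by
      intro q _
      have := hstep (f^[q] i)
      rw [← Function.iterate_succ_apply' f q i] at this
      linarith
    have := Finset.sum_lt_sum_of_nonempty (Finset.nonempty_range_iff.2 (by omega)) hlt
    rw [htel] at this
    exact this
  · intro h
    obtain ⟨σ, hσ⟩ := h ⟨0, hn⟩
    obtain ⟨x, hx⟩ := key hn (fun v => j v (σ v)) (fun v => k v (σ v)) hσ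
    refine ⟨x, fun i => ?_⟩
    calc x i < x (j i (σ i)) + k i (σ i) := hx i
      _ ≤ _ := Finset.le_sup' (fun l => x (j i l) + k i l) (Finset.mem_univ (σ i))
end

section
/- Let o consist of a single min-plus operator family on ℚⁿ: o_i(x) = min_j (x_{j} + k_{ij}) over the out-neighbours j of i in a finite weighted digraph. Then there exists y ∈ (ℚ ∪ {+∞})ⁿ, not identically +∞, with y ≥ o(y) componentwise, if and only if the digraph contains a cycle of total weight ≤ 0. -/
/-!
A supersolution `y` that is finite somewhere lets one walk forever along edges realising the
minimum; along such a walk `y` stays finite and drops by at least the edge weight at every step,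
so the walk eventually revisits a vertex and the cycle it closes has weight `≤ 0`. Conversely,
along a cycle of weight `≤ 0` the negated prefix weights, minimised over the visits of each
vertex (and `+∞` off the cycle), form a supersolution.
-/

open Finset

section MinPlus

variable {V : Type*} {E : V → Type*} {α : Type*} [AddCommGroup α] [LinearOrder α]
  (j : ∀ i, E i → V) (k : ∀ i, E i → α)

/-- `y ≥ o(y)`, with `o_i(y) = min_l (y (j i l) + k i l)`. -/
def IsSupersolution (y : V → WithTop α) : Prop :=
  ∀ i, ∃ l, y (j i l) + k i l ≤ y i

def HasNonposCycle : Prop :=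
  ∃ (p : ℕ) (v : ℕ → V) (l : (q : ℕ) → E (v q)),
    (∀ q ≤ p, j (v q) (l q) = v (q + 1)) ∧ v (p + 1) = v 0 ∧
    ∑ q ∈ range (p + 1), k (v q) (l q) ≤ 0

theorem IsSupersolution.exists_descending_walk {y : V → WithTop α}
    (hy : IsSupersolution j k y) (i₀ : V) :
    ∃ (v : ℕ → V) (l : (q : ℕ) → E (v q)), v 0 = i₀ ∧
      ∀ q, j (v q) (l q) = v (q + 1) ∧ y (v (q + 1)) + k (v q) (l q) ≤ y (v q) := by
  choose L hL using hy
  let v : ℕ → V := fun q => (fun i => j i (L i))^[q] i₀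
  have hv (q : ℕ) : v (q + 1) = j (v q) (L (v q)) := Function.iterate_succ_apply' ..
  exact ⟨v, fun q => L (v q), rfl, fun q => ⟨(hv q).symm, hv q ▸ hL (v q)⟩⟩

def cyclePotential [DecidableEq V] (p : ℕ) (v : ℕ → V) (c : ℕ → α) (i : V) :
    WithTop α :=
  ({q ∈ range (p + 1) | v q = i}).inf fun q => (↑(-∑ r ∈ range q, c r) : WithTop α)

section cyclePotential

variable [DecidableEq V] {p : ℕ} {v : ℕ → V} {c : ℕ → α}

theorem cyclePotential_apply_le {q : ℕ} (hq : q ≤ p) :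
    cyclePotential p v c (v q) ≤ ↑(-∑ r ∈ range q, c r) :=
  inf_le (by simp; omega)

theorem cyclePotential_eq_top_or_exists (i : V) :
    cyclePotential p v c i = ⊤ ∨
      ∃ q ≤ p, v q = i ∧ cyclePotential p v c i = ↑(-∑ r ∈ range q, c r) := by
  rcases eq_empty_or_nonempty {q ∈ range (p + 1) | v q = i} with hempty | hne
  · left
    simp only [cyclePotential, hempty, inf_empty]
  · right
    obtain ⟨q, hq, hinf⟩ := exists_mem_eq_inf _ hne
      fun q => (↑(-∑ r ∈ range q, c r) : WithTop α)
    simp only [mem_filter, mem_range] at hq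
    exact ⟨q, by omega, hq.2, hinf⟩

theorem cyclePotential_succ_le [IsOrderedAddMonoid α] (hcycle : v (p + 1) = v 0)
    (hsum : ∑ r ∈ range (p + 1), c r ≤ 0) {q : ℕ} (hq : q ≤ p) :
    cyclePotential p v c (v (q + 1)) ≤ ↑(-∑ r ∈ range (q + 1), c r) := by
  rcases hq.lt_or_eq with hlt | rfl
  · exact cyclePotential_apply_le hlt
  · calc cyclePotential q v c (v (q + 1))
        ≤ ↑(-∑ r ∈ range 0, c r) := hcycle ▸ cyclePotential_apply_le q.zero_le
      _ ≤ ↑(-∑ r ∈ range (q + 1), c r) := by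
          rw [WithTop.coe_le_coe, range_zero, sum_empty, neg_zero]
          exact neg_nonneg.2 hsum

end cyclePotential

variable [IsOrderedAddMonoid α]

theorem nonpos_of_add_coe_le_self {x : WithTop α} (hx : x ≠ ⊤) {s : α} (h : x + s ≤ x) :
    s ≤ 0 := by
  lift x to α using hx
  rw [← WithTop.coe_add, WithTop.coe_le_coe] at h
  exact (add_le_iff_nonpos_right x).1 h

theorem add_sum_range_le_of_forall_succ_add_le {f : ℕ → WithTop α} {c : ℕ → α}
    (h : ∀ q, f (q + 1) + c q ≤ f q) (N : ℕ) : f N + ↑(∑ q ∈ range N, c q) ≤ f 0 := by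
  induction N with
  | zero => simp
  | succ N ih =>
    calc f (N + 1) + ↑(∑ q ∈ range (N + 1), c q)
        = f (N + 1) + c N + ↑(∑ q ∈ range N, c q) := by
          rw [sum_range_succ, add_comm _ (c N), WithTop.coe_add, add_assoc]
      _ ≤ f N + ↑(∑ q ∈ range N, c q) := by gcongr; exact h N
      _ ≤ f 0 := ih

theorem IsSupersolution.hasNonposCycle [Finite V] {y : V → WithTop α}
    (hy : IsSupersolution j k y) {i₀ : V} (hi₀ : y i₀ ≠ ⊤) : HasNonposCycle j k := by
  obtain ⟨v, l, rfl, hv⟩ := hy.exists_descending_walk j k i₀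
  have hdescent (a N : ℕ) :
      y (v (a + N)) + ↑(∑ q ∈ range N, k (v (a + q)) (l (a + q))) ≤ y (v a) :=
    add_sum_range_le_of_forall_succ_add_le (f := fun q => y (v (a + q))) (fun q => (hv _).2) N
  obtain ⟨a, b, hab, hvab⟩ :=
    Set.finite_univ.exists_lt_map_eq_of_forall_mem (f := v) fun _ => Set.mem_univ _
  have hfin : y (v a) ≠ ⊤ := by
    have := ne_top_of_le_ne_top hi₀ (by simpa using hdescent 0 a)
    exact (WithTop.add_ne_top.1 this).1
  obtain ⟨p, rfl⟩ : ∃ p, b = a + (p + 1) := ⟨b - a - 1, by omega⟩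
  refine ⟨p, fun q => v (a + q), fun q => l (a + q), fun q _ => (hv _).1, hvab.symm, ?_⟩
  exact nonpos_of_add_coe_le_self hfin (hvab ▸ hdescent a (p + 1))

theorem HasNonposCycle.exists_isSupersolution [∀ i, Nonempty (E i)] (h : HasNonposCycle j k) :
    ∃ y : V → WithTop α, (∃ i, y i ≠ ⊤) ∧ IsSupersolution j k y := by
  classical
  obtain ⟨p, v, l, hwalk, hcycle, hsum⟩ := h
  set c : ℕ → α := fun q => k (v q) (l q)
  refine ⟨cyclePotential p v c, ⟨v 0, ne_top_of_le_ne_top WithTop.coe_ne_top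
    (cyclePotential_apply_le p.zero_le)⟩, fun i => ?_⟩
  rcases cyclePotential_eq_top_or_exists (p := p) (v := v) (c := c) i with
    htop | ⟨q, hq, rfl, hval⟩
  · exact ⟨Classical.arbitrary _, htop ▸ le_top⟩
  · refine ⟨l q, ?_⟩
    calc cyclePotential p v c (j (v q) (l q)) + k (v q) (l q)
        ≤ ↑(-∑ r ∈ range (q + 1), c r) + ↑(c q) := by
          rw [hwalk q hq]
          gcongr
          exact cyclePotential_succ_le hcycle hsum hq
      _ = cyclePotential p v c (v q) := by
          rw [hval, ← WithTop.coe_add, sum_range_succ, neg_add, neg_add_cancel_right]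

theorem hasNonposCycle_iff_exists_isSupersolution [Finite V] [∀ i, Nonempty (E i)] :
    HasNonposCycle j k ↔
      ∃ y : V → WithTop α, (∃ i, y i ≠ ⊤) ∧ IsSupersolution j k y :=
  ⟨HasNonposCycle.exists_isSupersolution j k,
    fun ⟨_, ⟨_, hi⟩, hy⟩ => hy.hasNonposCycle j k hi⟩

end MinPlus

theorem stmt13_general (n : ℕ) (m : Fin n → ℕ)
    (j : (i : Fin n) → Fin (m i + 1) → Fin n)
    (k : (i : Fin n) → Fin (m i + 1) → ℚ) :
    (∃ y : Fin n → WithTop ℚ, (¬ ∀ i, y i = ⊤) ∧ ∀ i,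
        Finset.univ.inf' Finset.univ_nonempty
          (fun l => y (j i l) + ((k i l : ℚ) : WithTop ℚ)) ≤ y i) ↔
    (∃ (p : ℕ) (v : ℕ → Fin n) (l : (q : ℕ) → Fin (m (v q) + 1)),
        (∀ q ≤ p, j (v q) (l q) = v (q + 1)) ∧ v (p + 1) = v 0 ∧
        ∑ q ∈ Finset.range (p + 1), k (v q) (l q) ≤ 0) := by
  simp only [not_forall, Finset.inf'_le_iff, Finset.mem_univ, true_and]
  exact (hasNonposCycle_iff_exists_isSupersolution j k).symm

/-- For a purely min-plus system `o_i(y) = min_l (y_{j i l} + k i l)` on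
`(ℚ ∪ {+∞})ⁿ`, a solution `y ≥ o(y)` not identically `+∞` exists iff the weighted
digraph contains a cycle of total weight `≤ 0`. -/
theorem stmt13 (n : ℕ) (hn : 1 ≤ n) (m : Fin n → ℕ)
    (j : (i : Fin n) → Fin (m i + 1) → Fin n)
    (k : (i : Fin n) → Fin (m i + 1) → ℚ) :
    (∃ y : Fin n → WithTop ℚ, (¬ ∀ i, y i = ⊤) ∧ ∀ i,
        Finset.univ.inf' Finset.univ_nonempty
          (fun l => y (j i l) + ((k i l : ℚ) : WithTop ℚ)) ≤ y i) ↔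
    (∃ (p : ℕ) (v : ℕ → Fin n) (l : (q : ℕ) → Fin (m (v q) + 1)),
        (∀ q ≤ p, j (v q) (l q) = v (q + 1)) ∧ v (p + 1) = v 0 ∧
        ∑ q ∈ Finset.range (p + 1), k (v q) (l q) ≤ 0) :=
  stmt13_general n m j k
end

section
/- Let a₀, a₁ ∈ ℝⁿ with (a₀)_j > 0 for all j. Suppose that for each j one of the following holds: (max case) (a₀)_j = max_{l ∈ E_j} (a₀)_l and (a₁)_j < max_{l ∈ E_j, (a₀)_l = (a₀)_j} (k_{jl} + (a₁)_l); (min case) same with max replaced by min in both places; (average case) (a₀)_j = Σ_{l ∈ E_j} p_{jl}(a₀)_l and (a₁)_j < Σ_{l ∈ E_j} p_{jl}(k_{jl} + (a₁)_l), where each E_j is a nonempty finite set, k_{jl} ∈ ℝ, and (p_{jl})_{l ∈ E_j} is a probability vector. Then for all sufficiently large N ∈ ℝ, the vector x with x_j = N(a₀)_j + (a₁)_j satisfies, for each j: x_j < max_{l ∈ E_j}(x_l + k_{jl}) in the max case, x_j < min_{l ∈ E_j}(x_l + k_{jl}) in the min case, and x_j < Σ_l p_{jl}(x_l + k_{jl})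 in the average case. -/
/-- The scaling lemma: if `a₀ > 0` componentwise and `(a₀, a₁)` satisfy the
first-two-coefficient conditions of the limit discount equation (with strict
inequality at order one), at max-, min- and average-vertices as indicated by
`c j ∈ {0,1,2}` respectively, then for all sufficiently large `N` the vector
`x_j = N·(a₀)_j + (a₁)_j` strictly satisfies the corresponding primal system. -/
theorem stmt15 (n : ℕ) (a₀ a₁ : Fin n → ℝ) (hpos : ∀ j, 0 < a₀ j)
    (E : Fin n → Finset (Fin n)) (hE : ∀ j, (E j).Nonempty)
    (kk : Fin n → Fin n → ℝ) (c : Fin n → Fin 3) (p : Fin n → Fin n → ℝ)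
    (hmax : ∀ j, c j = 0 →
      a₀ j = (E j).sup' (hE j) a₀ ∧
      ∃ l ∈ E j, a₀ l = a₀ j ∧ a₁ j < kk j l + a₁ l)
    (hmin : ∀ j, c j = 1 →
      a₀ j = (E j).inf' (hE j) a₀ ∧
      ∀ l ∈ E j, a₀ l = a₀ j → a₁ j < kk j l + a₁ l)
    (havg : ∀ j, c j = 2 →
      (∀ l ∈ E j, 0 < p j l) ∧ (∑ l ∈ E j, p j l) = 1 ∧
      a₀ j = ∑ l ∈ E j, p j l * a₀ l ∧
      a₁ j < ∑ l ∈ E j, p j l * (kk j l + a₁ l)) :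
    ∃ N₀ : ℝ, ∀ N : ℝ, N₀ ≤ N →
      (∀ j, c j = 0 → ∃ l ∈ E j,
        N * a₀ j + a₁ j < (N * a₀ l + a₁ l) + kk j l) ∧
      (∀ j, c j = 1 → ∀ l ∈ E j,
        N * a₀ j + a₁ j < (N * a₀ l + a₁ l) + kk j l) ∧
      (∀ j, c j = 2 →
        N * a₀ j + a₁ j < ∑ l ∈ E j, p j l * ((N * a₀ l + a₁ l) + kk j l)) := by
  set f : Fin n → Fin n → ℝ := fun j l => (a₁ j - a₁ l - kk j l) / (a₀ l - a₀ j) with hf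
  refine ⟨1 + ∑ j, ∑ l, |f j l|, fun N hN => ⟨?_, ?_, ?_⟩⟩
  · intro j hj
    obtain ⟨-, l, hl, h0, h1⟩ := hmax j hj
    refine ⟨l, hl, ?_⟩
    have : N * a₀ j = N * a₀ l := by rw [h0]
    linarith
  · intro j hj l hl
    obtain ⟨h0, h1⟩ := hmin j hj
    have hle : a₀ j ≤ a₀ l := h0 ▸ Finset.inf'_le _ hl
    rcases eq_or_lt_of_le hle with heq | hlt
    · have h2 := h1 l hl heq.symm
      have : N * a₀ j = N * a₀ l := by rw [heq]
      linarith
    · have hgap : 0 < a₀ l - a₀ j := by linarith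
      have habs : |f j l| ≤ ∑ j, ∑ l, |f j l| := by
        calc |f j l| ≤ ∑ l, |f j l| :=
              Finset.single_le_sum (f := fun l => |f j l|)
                (fun _ _ => abs_nonneg _) (Finset.mem_univ l)
          _ ≤ _ := Finset.single_le_sum (f := fun j => ∑ l, |f j l|)
              (fun _ _ => Finset.sum_nonneg fun _ _ => abs_nonneg _) (Finset.mem_univ j)
      have hfN : f j l < N := by
        have := le_abs_self (f j l)
        linarith
      have := (div_lt_iff₀ hgap).mp hfN
      nlinarith
  · intro j hj
    obtain ⟨hp, hps, h0, h1⟩ := havg j hj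
    have key : ∑ l ∈ E j, p j l * ((N * a₀ l + a₁ l) + kk j l)
        = N * (∑ l ∈ E j, p j l * a₀ l) + ∑ l ∈ E j, p j l * (kk j l + a₁ l) := by
      rw [Finset.mul_sum, ← Finset.sum_add_distrib]
      exact Finset.sum_congr rfl fun l _ => by ring
    rw [key, ← h0]
    linarith
end
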